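/- arXiv:1509.04880 — 3 statements merged into one kernel-verified Lean document; each statement's English description precedes it below -/
import Mathlib

section
/- For every positive integer w, the graph H_w, consisting of w disjoint cliques Q_1,…,Q_w each on w vertices labeled (i,1),…,(i,w), together with edges {(i,j),(j,i)} for all 1 ≤ i < j ≤ w, has tree-cut width at most w + 1. -/
open scoped Classical

noncomputable section

/-- A multigraph on vertex type `V`: a set of vertices together with a multiset of
(undirected, loopless) edges, parallel edges being allowed. -/
structure MGraph (V : Type) where
  verts : Set V
  edges : Multiset (Sym2 V)

namespace MGraph

variable {V : Type}

/-- The degree of a vertex: the number of incident edges, with multiplicity. -/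
def degree (G : MGraph V) (x : V) : ℕ :=
  (G.edges.filter (fun e => x ∈ e)).card

/-- The set of neighbours of a vertex. -/
def nbrSet (G : MGraph V) (x : V) : Set V :=
  {y | y ≠ x ∧ s(x, y) ∈ G.edges}

/-- `δ_G(A,B)`: the multiset of edges of `G` with one endpoint in `A` and the other in `B`. -/
def cut (G : MGraph V) (A B : Set V) : Multiset (Sym2 V) :=
  G.edges.filter (fun e => ∃ a ∈ A, ∃ b ∈ B, e = s(a, b))

/-- Adjacency in a multigraph. -/
def Adj (G : MGraph V) (x y : V) : Prop := x ≠ y ∧ s(x, y) ∈ G.edges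

/-- Connectivity of a multigraph. -/
def Connected (G : MGraph V) : Prop :=
  G.verts.Nonempty ∧ ∀ x ∈ G.verts, ∀ y ∈ G.verts, Relation.ReflTransGen G.Adj x y

/-- Deleting a (multi)set of edges from a multigraph. -/
def deleteEdges (G : MGraph V) (F : Multiset (Sym2 V)) : MGraph V :=
  ⟨G.verts, G.edges - F⟩

/-- A multigraph is 3-edge-connected if it is connected and remains connected after
removal of any set of at most 2 edges. -/
def ThreeEdgeConnected (G : MGraph V) : Prop :=
  G.Connected ∧ ∀ F : Multiset (Sym2 V), F ≤ G.edges → Multiset.card F ≤ 2 →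
    (G.deleteEdges F).Connected

/-- The induced sub-multigraph on a set of vertices. -/
def induce (G : MGraph V) (S : Set V) : MGraph V :=
  ⟨G.verts ∩ S, G.edges.filter (fun e => ∀ v ∈ e, v ∈ S)⟩

/-- `∂_G(S)`: the vertices of `S` having a neighbour outside of `S`. -/
def boundary (G : MGraph V) (S : Set V) : Set V :=
  {x | x ∈ S ∧ ∃ u, u ∈ G.verts ∧ u ∉ S ∧ s(x, u) ∈ G.edges}

/-- `|δ_G({x}, V(G)∖S)|`: the number of edges from `x` to the outside of `S`. -/
def bWeight (G : MGraph V) (S : Set V) (x : V) : ℕ :=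
  (G.edges.filter (fun e => ∃ u, u ∈ G.verts ∧ u ∉ S ∧ e = s(x, u))).card

/-- Dissolving step used in the definition of the 3-center of `(G, X)`: a vertex `x ∉ X`
of degree 2 with exactly two (distinct) neighbours `y, z` is removed and the edge `yz`
is added (increasing its multiplicity if it is already present). -/
def DissolveStep (X : Set V) (G G' : MGraph V) : Prop :=
  ∃ x y z, x ∉ X ∧ x ∈ G.verts ∧ y ≠ z ∧ x ≠ y ∧ x ≠ z ∧
    G.edges.filter (fun e => x ∈ e) = {s(x, y), s(x, z)} ∧
    G' = ⟨G.verts \ {x}, G.edges.filter (fun e => x ∉ e) + {s(y, z)}⟩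

/-- Deletion step used in the definition of the 3-center of `(G, X)`: a vertex `x ∉ X`
of degree at most 2 with at most one neighbour is removed. -/
def DeleteStep (X : Set V) (G G' : MGraph V) : Prop :=
  ∃ x, x ∉ X ∧ x ∈ G.verts ∧ G.degree x ≤ 2 ∧ (G.nbrSet x).Subsingleton ∧
    G' = ⟨G.verts \ {x}, G.edges.filter (fun e => x ∉ e)⟩

def CenterStep (X : Set V) (G G' : MGraph V) : Prop :=
  DissolveStep X G G' ∨ DeleteStep X G G'

/-- `H` is a 3-center of `(G, X)` if it is obtained from `G` by repeatedly applying
dissolve/delete steps until none applies. -/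
def IsThreeCenter (X : Set V) (G H : MGraph V) : Prop :=
  Relation.ReflTransGen (CenterStep X) G H ∧ ∀ H', ¬ CenterStep X H H'

/-- `(T, X)` is a tree-cut decomposition of `G`: `T` is a tree and the bags `X t` are
pairwise disjoint with union `V(G)`. -/
def IsTCD {ι : Type} (G : MGraph V) (T : SimpleGraph ι) (X : ι → Set V) : Prop :=
  T.IsTree ∧ (Pairwise fun t t' => Disjoint (X t) (X t')) ∧ (⋃ t, X t) = G.verts

/-- Given a tree edge `{a,b}` of `T`, the union of the bags over the component of
`T - {a,b}` containing `a`. -/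
def edgeSide {ι : Type} (T : SimpleGraph ι) (X : ι → Set V) (a b : ι) : Set V :=
  ⋃ t ∈ {t | (T.deleteEdges {s(a, b)}).Reachable a t}, X t

/-- The adhesion `δ^T({a,b})` of a tree edge of a tree-cut decomposition. -/
def adhesion (G : MGraph V) {ι : Type} (T : SimpleGraph ι) (X : ι → Set V) (a b : ι) :
    Multiset (Sym2 V) :=
  G.cut (edgeSide T X a b) (edgeSide T X b a)

/-- `a` and `b` are connected in `T - t`. -/
def ReachAvoid {ι : Type} (T : SimpleGraph ι) (t a b : ι) : Prop :=
  ∃ (ha : a ∈ ({t}ᶜ : Set ι)) (hb : b ∈ ({t}ᶜ : Set ι)),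
    (T.induce ({t}ᶜ : Set ι)).Reachable ⟨a, ha⟩ ⟨b, hb⟩

/-- The neighbour of `t` indexing the component of `T - t` whose bags contain `v`. -/
def compOf {ι : Type} (T : SimpleGraph ι) (X : ι → Set V) (t : ι) (v : V) : ι :=
  if h : ∃ s, T.Adj t s ∧ ∃ t', v ∈ X t' ∧ ReachAvoid T t s t' then h.choose else t

/-- The identification map used in the definition of the torso at `t`. -/
def torsoMap {ι : Type} (T : SimpleGraph ι) (X : ι → Set V) (t : ι) (v : V) : V ⊕ ι :=
  if v ∈ X t then Sum.inl v else Sum.inr (compOf T X t v)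

/-- The torso of `G` at node `t` of the tree-cut decomposition `(T, X)`: each non-empty
union of bags over a component of `T - t` is identified to a single vertex (components
are indexed by the corresponding neighbour of `t`); parallel edges are kept, loops
are discarded. -/
def torso {ι : Type} (G : MGraph V) (T : SimpleGraph ι) (X : ι → Set V) (t : ι) :
    MGraph (V ⊕ ι) :=
  ⟨Sum.inl '' (X t) ∪
     Sum.inr '' {s | T.Adj t s ∧ ∃ t' v, v ∈ X t' ∧ ReachAvoid T t s t'},
   (G.edges.map (Sym2.map (torsoMap T X t))).filter (fun e => ¬ e.IsDiag)⟩

/-- The width of the tree-cut decomposition `(T, X)` of `G` is at most `w`: all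
adhesions have at most `w` edges and all 3-centers of torsos have at most `w` vertices. -/
def WidthLE {ι : Type} (G : MGraph V) (T : SimpleGraph ι) (X : ι → Set V) (w : ℕ) : Prop :=
  (∀ a b, T.Adj a b → Multiset.card (adhesion G T X a b) ≤ w) ∧
  ∀ t H, IsThreeCenter (Sum.inl '' (X t)) (torso G T X t) H → H.verts.ncard ≤ w

/-- `G` has a tree-cut decomposition of width at most `w`. -/
def tcwLE (G : MGraph V) (w : ℕ) : Prop :=
  ∃ (ι : Type) (_ : Finite ι) (T : SimpleGraph ι) (X : ι → Set V),
    IsTCD G T X ∧ WidthLE G T X w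

/-- The tree-cut width of a multigraph. -/
def tcw (G : MGraph V) : ℕ := sInf {w | tcwLE G w}

/-- A leaf of a tree: a node with exactly one neighbour. -/
def IsLeaf {ι : Type} (T : SimpleGraph ι) (t : ι) : Prop := ∃! s, T.Adj t s

/-- The internal width of `(T, X)` is at most `w`: all adhesions are at most `w` and the
3-center torso sizes of all *non-leaf* nodes are at most `w`. -/
def InWidthLE {ι : Type} (G : MGraph V) (T : SimpleGraph ι) (X : ι → Set V) (w : ℕ) : Prop :=
  (∀ a b, T.Adj a b → Multiset.card (adhesion G T X a b) ≤ w) ∧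
  ∀ t, ¬ IsLeaf T t →
    ∀ H, IsThreeCenter (Sum.inl '' (X t)) (torso G T X t) H → H.verts.ncard ≤ w

/-- A tree-cut decomposition is non-trivial if at least two bags are non-empty. -/
def NonTrivial {ι : Type} (X : ι → Set V) : Prop :=
  ∃ t t', t ≠ t' ∧ (X t).Nonempty ∧ (X t').Nonempty

/-- Identifying the vertex set `S` of `G` into the single vertex `v₀ ∈ S`:
edges inside `S` are deleted (loops discarded), parallel edges are kept. -/
def collapse (G : MGraph V) (S : Set V) (v₀ : V) : MGraph V :=
  ⟨(G.verts \ S) ∪ {v₀},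
   (G.edges.map (Sym2.map (fun x => if x ∈ S then v₀ else x))).filter (fun e => ¬ e.IsDiag)⟩

/-- One step of taking an immersion: deleting an edge, deleting a vertex, or lifting a
pair of edges `{x,v}, {v,y}` to the single edge `{x,y}`. -/
def ImmStep (G G' : MGraph V) : Prop :=
  (∃ e ∈ G.edges, G' = ⟨G.verts, G.edges.erase e⟩) ∨
  (∃ v ∈ G.verts, G' = ⟨G.verts \ {v}, G.edges.filter (fun e => v ∉ e)⟩) ∨
  (∃ x v y, x ≠ v ∧ y ≠ v ∧ x ≠ y ∧ s(x, v) ∈ G.edges ∧ s(v, y) ∈ G.edges.erase s(x, v) ∧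
    G' = ⟨G.verts, s(x, y) ::ₘ ((G.edges.erase s(x, v)).erase s(v, y))⟩)

/-- `H` is an immersion of `G`. -/
def IsImmersion (H G : MGraph V) : Prop := Relation.ReflTransGen ImmStep G H

end MGraph

/-- The multigraph associated to a simple graph. -/
def SimpleGraph.toMGraph {α : Type} [Fintype α] (G : SimpleGraph α) : MGraph α :=
  ⟨Set.univ, (Set.toFinite G.edgeSet).toFinset.val⟩

/-- The star with `ℓ` leaves: center `none`, leaves `some i`. -/
def starGraph (ℓ : ℕ) : SimpleGraph (Option (Fin ℓ)) :=
  SimpleGraph.fromRel (fun a _ => a = none)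

/-- The graph `H_w`: `w` disjoint cliques `Q_i = {(i,j) : j}` of size `w`, together with
the cross edges `{(i,j),(j,i)}` for `i ≠ j`. -/
def Hw (w : ℕ) : SimpleGraph (Fin w × Fin w) :=
  SimpleGraph.fromRel (fun p q => p.1 = q.1 ∨ (q.1 = p.2 ∧ q.2 = p.1))

/-- Two vertex sets touch in `G`: they intersect or are joined by an edge. -/
def Touch {α : Type} (G : SimpleGraph α) (A B : Set α) : Prop :=
  (A ∩ B).Nonempty ∨ ∃ a ∈ A, ∃ b ∈ B, G.Adj a b

/-- A bramble: a collection of (vertex sets of) connected subgraphs pairwise touching. -/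
def IsBramble {α : Type} (G : SimpleGraph α) (ℬ : Set (Set α)) : Prop :=
  (∀ A ∈ ℬ, (G.induce A).Connected) ∧ ∀ A ∈ ℬ, ∀ B ∈ ℬ, Touch G A B

/-- `B(i,Z) = {(i,j) : j ∈ Z} ∪ {(j,i) : j ∈ Z}`. -/
def Bset (w : ℕ) (i : Fin w) (Z : Finset (Fin w)) : Set (Fin w × Fin w) :=
  {p | (p.1 = i ∧ p.2 ∈ Z) ∨ (p.2 = i ∧ p.1 ∈ Z)}

/-- The bramble `B_w = {H_w[B(i,Z)] : i ∈ [w], Z ⊆ [w]∖{i}, |Z| = w/2}`. -/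
def Bfam (w : ℕ) : Set (Set (Fin w × Fin w)) :=
  {A | ∃ (i : Fin w) (Z : Finset (Fin w)), i ∉ Z ∧ Z.card = w / 2 ∧ A = Bset w i Z}

/-- `(T, Y)` is a tree decomposition of the simple graph `G`. -/
def IsTreeDecomp {α ι : Type} (G : SimpleGraph α) (T : SimpleGraph ι) (Y : ι → Set α) : Prop :=
  T.IsTree ∧ (∀ v, ∃ x, v ∈ Y x) ∧
  (∀ u v, G.Adj u v → ∃ x, u ∈ Y x ∧ v ∈ Y x) ∧
  (∀ v, (T.induce {x | v ∈ Y x}).Connected)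

/-- `G` has treewidth at most `k`. -/
def twLE {α : Type} (G : SimpleGraph α) (k : ℕ) : Prop :=
  ∃ (ι : Type) (_ : Finite ι) (T : SimpleGraph ι) (Y : ι → Set α),
    IsTreeDecomp G T Y ∧ ∀ x, (Y x).ncard ≤ k + 1

end
noncomputable section
open scoped Classical

namespace MGraph

variable {V : Type}

/-- The weight function `γ'` of Lemma 4: `γ'(v) = |δ_G({v}, V(G)∖S)|` for `v ∈ S`,
and `0` otherwise. -/
def gammaExt (G : MGraph V) (S : Set V) (v : V) : ℕ :=
  if v ∈ S then G.bWeight S v else 0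

/-- `γ'(T_b)` where `T_b` is the component of `T - {a,b}` containing `b`. -/
def sideWeight (G : MGraph V) {ι : Type} (T : SimpleGraph ι) (X : ι → Set V)
    (S : Set V) (a b : ι) : ℕ :=
  ∑ᶠ t ∈ {t | (T.deleteEdges {s(a, b)}).Reachable b t}, ∑ᶠ v ∈ X t, G.gammaExt S v

/-- The edge `{x,y}` of `T` is oriented from `x` to `y` by Rule 1 (`γ'(T_y) > w`) or by
Rule 2 (`S` avoids all the bags on the `x`-side). -/
def ruleOrient (G : MGraph V) {ι : Type} (T : SimpleGraph ι) (X : ι → Set V)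
    (S : Set V) (w : ℕ) (x y : ι) : Prop :=
  w < G.sideWeight T X S x y ∨ S ∩ edgeSide T X x y = ∅

end MGraph

/-- The tree obtained from `T` by attaching `ℓ` new leaves to the node `t`
(`t` plays the role of the center of the star replacing the former leaf `t`). -/
def refineTree {ι : Type} (T : SimpleGraph ι) (t : ι) (ℓ : ℕ) : SimpleGraph (ι ⊕ Fin ℓ) :=
  SimpleGraph.fromRel (fun a b =>
    (∃ i j, a = Sum.inl i ∧ b = Sum.inl j ∧ T.Adj i j) ∨
    (a = Sum.inl t ∧ ∃ i, b = Sum.inr i))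

/-- The bags of the refined decomposition: the bag of the former leaf `t` is replaced by
the central bag `Xs none` of the star decomposition, the new leaves get the leaf bags. -/
def refineBags {V ι : Type} (X : ι → Set V) (t : ι) {ℓ : ℕ}
    (Xs : Option (Fin ℓ) → Set V) : ι ⊕ Fin ℓ → Set V :=
  fun s => Sum.rec (fun a => if a = t then Xs none else X a) (fun i => Xs (some i)) s

/-- `w = n³/2 + k`, the target width in the Min Bisection reduction. -/
def bisectW (n k : ℕ) : ℕ := n ^ 3 / 2 + k

/-- The vertex type of the graph `G'` of the Min Bisection reduction:
`V = Fin n`, `Q = Fin (w-2)`, and a set `C_{x,y}` of `w+1` vertices for each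
(unordered) pair `x < y` of vertices of `Q`. -/
abbrev BisV (n w : ℕ) : Type :=
  Fin n ⊕ (Fin (w - 2) ⊕ (({p : Fin (w - 2) × Fin (w - 2) // p.1 < p.2}) × Fin (w + 1)))

/-- The (one-directional) edge relation of `G'`: `V` induces a copy of `G`; each vertex
`a ∈ V` is adjacent to the `n²` vertices `f a ⊆ Q`; every vertex of `C_{x,y}` is
adjacent to both `x` and `y`. -/
def bisectR {n : ℕ} (G : SimpleGraph (Fin n)) (w : ℕ) (f : Fin n → Finset (Fin (w - 2))) :
    BisV n w → BisV n w → Prop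
  | Sum.inl a, Sum.inl b => G.Adj a b
  | Sum.inl a, Sum.inr (Sum.inl q) => q ∈ f a
  | Sum.inr (Sum.inl q), Sum.inr (Sum.inr c) => q = c.1.1.1 ∨ q = c.1.1.2
  | _, _ => False

/-- The graph `G'` of the Min Bisection reduction. -/
def bisectG {n : ℕ} (G : SimpleGraph (Fin n)) (w : ℕ) (f : Fin n → Finset (Fin (w - 2))) :
    SimpleGraph (BisV n w) :=
  SimpleGraph.fromRel (bisectR G w f)

/-- The multiset of edges used by a walk, given as its list of vertices. -/
def walkEdges {V : Type} (l : List V) : Multiset (Sym2 V) :=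
  ↑((l.zip l.tail).map fun p => s(p.1, p.2))

end

noncomputable section
open scoped Classical
open MGraph


/-!
Use the star decomposition: one leaf per clique `Q_i`, with bag `Q_i`, and an empty bag at the
centre. The only edges leaving `Q_i` are the cross edges `(i,j)(j,i)`, so every adhesion has at
most `w` edges. A 3-center of a torso has no more vertices than the torso itself: at a leaf that
is `Q_i` plus one vertex for the rest of the graph, at the centre one vertex per leaf.
-/

namespace MGraph

variable {V : Type}

lemma cut_comm (G : MGraph V) (A B : Set V) : G.cut A B = G.cut B A := by
  unfold cut
  congr 1
  ext e
  constructor <;>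
  · rintro ⟨a, ha, b, hb, rfl⟩
    exact ⟨b, hb, a, ha, Sym2.eq_swap⟩

lemma cut_le_edges (G : MGraph V) (A B : Set V) : G.cut A B ≤ G.edges :=
  Multiset.filter_le _ _

lemma adhesion_comm (G : MGraph V) {ι : Type} (T : SimpleGraph ι) (X : ι → Set V) (a b : ι) :
    adhesion G T X a b = adhesion G T X b a :=
  cut_comm G _ _

lemma CenterStep.verts_subset {X : Set V} {G G' : MGraph V} (h : CenterStep X G G') :
    G'.verts ⊆ G.verts := by
  rcases h with ⟨x, y, z, -, -, -, -, -, -, rfl⟩ | ⟨x, -, -, -, -, rfl⟩ <;>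
    exact Set.sdiff_subset

lemma IsThreeCenter.verts_subset {X : Set V} {G H : MGraph V} (h : IsThreeCenter X G H) :
    H.verts ⊆ G.verts := by
  obtain ⟨hsteps, -⟩ := h
  induction hsteps with
  | refl => exact subset_rfl
  | tail _ hstep ih => exact hstep.verts_subset.trans ih

lemma torso_verts_subset (G : MGraph V) {ι : Type} (T : SimpleGraph ι) (X : ι → Set V) (t : ι) :
    (torso G T X t).verts ⊆ Sum.inl '' X t ∪ Sum.inr '' T.neighborSet t :=
  Set.union_subset_union_right _ (Set.image_mono fun _ hs => hs.1)

lemma ncard_verts_le_of_isThreeCenter [Finite V] (G : MGraph V) {ι : Type} [Finite ι]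
    (T : SimpleGraph ι) (X : ι → Set V) (t : ι) {H : MGraph (V ⊕ ι)}
    (hH : IsThreeCenter (Sum.inl '' X t) (torso G T X t) H) :
    H.verts.ncard ≤ (X t).ncard + (T.neighborSet t).ncard :=
  calc H.verts.ncard
      ≤ (Sum.inl '' X t ∪ Sum.inr '' T.neighborSet t).ncard :=
        Set.ncard_le_ncard (hH.verts_subset.trans (torso_verts_subset G T X t))
    _ ≤ (Sum.inl '' X t).ncard + (Sum.inr '' T.neighborSet t).ncard := Set.ncard_union_le _ _
    _ = (X t).ncard + (T.neighborSet t).ncard := by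
        rw [Set.ncard_image_of_injective _ Sum.inl_injective,
          Set.ncard_image_of_injective _ Sum.inr_injective]

end MGraph

lemma SimpleGraph.card_cut_toMGraph_le {α : Type} [Fintype α] (G : SimpleGraph α)
    (A B : Set α) (S : Finset (Sym2 α)) (hS : ∀ a ∈ A, ∀ b ∈ B, G.Adj a b → s(a, b) ∈ S) :
    Multiset.card (G.toMGraph.cut A B) ≤ S.card := by
  have hnodup : (G.toMGraph.cut A B).Nodup :=
    Multiset.nodup_of_le (G.toMGraph.cut_le_edges A B) (Set.toFinite G.edgeSet).toFinset.nodup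
  refine Multiset.card_le_card ((Multiset.le_iff_subset hnodup).2 fun e he => ?_)
  simp only [MGraph.cut, Multiset.mem_filter] at he
  obtain ⟨he, a, ha, b, hb, rfl⟩ := he
  exact hS a ha b hb (by simpa [SimpleGraph.toMGraph] using he)

lemma starGraph_eq (ℓ : ℕ) : starGraph ℓ = SimpleGraph.starGraph none := rfl

lemma reachable_starGraph_deleteEdges_leaf_iff {ℓ : ℕ} (i : Fin ℓ) (t : Option (Fin ℓ)) :
    ((starGraph ℓ).deleteEdges {s(some i, none)}).Reachable (some i) t ↔ t = some i := by
  refine ⟨fun h => ?_, by rintro rfl; rfl⟩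
  by_contra hne
  refine SimpleGraph.not_reachable_of_neighborSet_left_eq_empty (Ne.symm hne) ?_ h
  ext x
  simp [starGraph_eq, or_comm]

lemma edgeSide_starGraph_leaf {V : Type} {ℓ : ℕ} (X : Option (Fin ℓ) → Set V) (i : Fin ℓ) :
    edgeSide (starGraph ℓ) X (some i) none = X (some i) := by
  simp [edgeSide, reachable_starGraph_deleteEdges_leaf_iff]

lemma edgeSide_starGraph_center_subset {V : Type} {ℓ : ℕ} (X : Option (Fin ℓ) → Set V)
    (i : Fin ℓ) : edgeSide (starGraph ℓ) X none (some i) ⊆ ⋃ t ≠ some i, X t := by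
  refine Set.biUnion_subset_biUnion_left fun t (ht : SimpleGraph.Reachable _ _ _) hti => ?_
  subst hti
  rw [Sym2.eq_swap] at ht
  simpa using (reachable_starGraph_deleteEdges_leaf_iff i none).1 ht.symm

def cliqueBags (w : ℕ) : Option (Fin w) → Set (Fin w × Fin w)
  | none => ∅
  | some i => {p | p.1 = i}

lemma Hw_adj_eq_swap {w : ℕ} {p q : Fin w × Fin w} (h : (Hw w).Adj p q) (hpq : p.1 ≠ q.1) :
    q = p.swap := by
  rw [Hw, SimpleGraph.fromRel_adj] at h
  obtain ⟨-, (h | ⟨h1, h2⟩) | (h | ⟨h1, h2⟩)⟩ := h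
  · exact absurd h hpq
  · exact Prod.ext h1 h2
  · exact absurd h.symm hpq
  · exact Prod.ext h2.symm h1.symm

lemma card_cut_Hw_le {w : ℕ} (i : Fin w) {A B : Set (Fin w × Fin w)}
    (hA : A ⊆ {p | p.1 = i}) (hB : B ⊆ {p | p.1 ≠ i}) :
    Multiset.card ((Hw w).toMGraph.cut A B) ≤ w := by
  have hcross : ∀ a ∈ A, ∀ b ∈ B, (Hw w).Adj a b →
      s(a, b) ∈ Finset.univ.image fun j : Fin w => s((i, j), (j, i)) := by
    intro a ha b hb hab
    have hai : a.1 = i := hA ha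
    obtain rfl := Hw_adj_eq_swap hab (hai.trans_ne (hB hb).symm)
    exact Finset.mem_image.2 ⟨a.2, Finset.mem_univ _, by rw [← hai]; rfl⟩
  exact ((Hw w).card_cut_toMGraph_le A B _ hcross).trans (Finset.card_image_le.trans (by simp))

lemma card_adhesion_cliqueBags_le {w : ℕ} {a b : Option (Fin w)} (hab : (starGraph w).Adj a b) :
    Multiset.card (adhesion (Hw w).toMGraph (starGraph w) (cliqueBags w) a b) ≤ w := by
  have hleaf : ∀ i : Fin w,
      Multiset.card (adhesion (Hw w).toMGraph (starGraph w) (cliqueBags w) (some i) none) ≤ w := by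
    intro i
    refine card_cut_Hw_le i (edgeSide_starGraph_leaf _ i).subset
      ((edgeSide_starGraph_center_subset _ i).trans (Set.iUnion₂_subset fun t hti p hp => ?_))
    cases t with
    | none => exact hp.elim
    | some j => exact fun hpi => hti (congrArg some ((hp : p.1 = j).symm.trans hpi))
  rw [starGraph_eq, SimpleGraph.starGraph_adj] at hab
  obtain ⟨hne, rfl | rfl⟩ := hab
  · cases b with
    | none => exact absurd rfl hne
    | some i => rw [adhesion_comm]; exact hleaf i
  · cases a with
    | none => exact absurd rfl hne
    | some i => exact hleaf i

lemma ncard_threeCenter_cliqueBags_le {w : ℕ} (t : Option (Fin w))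
    {H : MGraph ((Fin w × Fin w) ⊕ Option (Fin w))}
    (hH : IsThreeCenter (Sum.inl '' cliqueBags w t)
      (torso (Hw w).toMGraph (starGraph w) (cliqueBags w) t) H) :
    H.verts.ncard ≤ w + 1 := by
  refine (ncard_verts_le_of_isThreeCenter _ _ _ t hH).trans ?_
  cases t with
  | none => simpa [cliqueBags] using Set.ncard_le_card ((starGraph w).neighborSet none)
  | some i =>
    have hbag : (cliqueBags w (some i)).ncard = w := by
      have hrange : cliqueBags w (some i) = Set.range (Prod.mk i) :=
        Set.ext fun p => ⟨fun hp => ⟨p.2, Prod.ext hp.symm rfl⟩, by rintro ⟨j, rfl⟩; rfl⟩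
      rw [hrange, Set.ncard_range_of_injective (Prod.mk_right_injective i), Nat.card_fin]
    have hnbr : ((starGraph w).neighborSet (some i)).ncard ≤ 1 := by
      rw [Set.ncard_le_one_iff_subsingleton]
      refine (Set.subsingleton_singleton (a := none)).anti fun x hx => ?_
      simp only [starGraph_eq, SimpleGraph.mem_neighborSet, SimpleGraph.starGraph_adj] at hx
      exact hx.2.resolve_left (Option.some_ne_none i)
    omega

lemma isTCD_cliqueBags (w : ℕ) : IsTCD (Hw w).toMGraph (starGraph w) (cliqueBags w) := by
  refine ⟨SimpleGraph.isTree_starGraph none, ?_, ?_⟩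
  · rintro (_ | i) (_ | j) hij
    · exact absurd rfl hij
    · exact Set.empty_disjoint _
    · exact Set.disjoint_empty _
    · exact Set.disjoint_left.2 fun p (hp : p.1 = i) (hq : p.1 = j) =>
        hij (congrArg some (hp.symm.trans hq))
  · exact Set.eq_univ_of_forall fun p => Set.mem_iUnion.2 ⟨some p.1, rfl⟩

theorem tcw_Hw_le_general (w : ℕ) : tcw (Hw w).toMGraph ≤ w + 1 :=
  Nat.sInf_le ⟨Option (Fin w), inferInstance, starGraph w, cliqueBags w, isTCD_cliqueBags w,
    fun _ _ hab => (card_adhesion_cliqueBags_le hab).trans (Nat.le_succ w),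
    fun t _ hH => ncard_threeCenter_cliqueBags_le t hH⟩

theorem tcw_Hw_le (w : ℕ) (hw : 1 ≤ w) : tcw (Hw w).toMGraph ≤ w + 1 :=
  tcw_Hw_le_general w

end
end

section
/- Let w be an even positive integer and H_w the graph on vertices {(i,j) : i,j ∈ [w]} where each Q_i = {(i,j) : j ∈ [w]} is a clique and (i,j) is adjacent to (j,i) for i ≠ j. Define the bramble B_w = { H_w[B(i,Z)] : i ∈ [w], Z ⊆ [w]∖{i}, |Z| = w/2 }, where B(i,Z) = {(i,j) : j ∈ Z} ∪ {(j,i) : j ∈ Z}. Then B_w is a bramble of H_w: every element is a connected subgraph and every two elements touch each other. -/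
/-!
Every set `B(i,Z)` is connected through the clique `Q_i`: a vertex `(j,i)` is joined to
`(i,j) ∈ Q_i` by its cross edge. For touching, `|Z| + |Z'| = w`; if `B(i,Z)` and `B(i',Z')`
do not meet in `(i,i')`, some index lies outside `Z ∪ Z'`, so `Z` and `Z'` share an index `j`,
and then `(j,i)` and `(j,i')` are equal or adjacent in the clique `Q_j`.
-/

open scoped Classical

noncomputable section
open scoped Classical
open MGraph

open Finset

lemma inter_nonempty_of_notMem_union {α : Type*} [Fintype α] [DecidableEq α]
    {s t : Finset α} {x : α} (hx : x ∉ s ∪ t) (hcard : Fintype.card α ≤ #s + #t) :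
    (s ∩ t).Nonempty := by
  refine inter_nonempty_of_card_lt_card_add_card (s := univ.erase x) ?_ ?_ ?_
  · exact fun y hy => mem_erase.2 ⟨fun h => hx (mem_union_left t (h ▸ hy)), mem_univ y⟩
  · exact fun y hy => mem_erase.2 ⟨fun h => hx (mem_union_right s (h ▸ hy)), mem_univ y⟩
  · rw [card_erase_of_mem (mem_univ x), card_univ]
    have : 0 < Fintype.card α := Fintype.card_pos_iff.2 ⟨x⟩
    omega

namespace Hw

variable {w : ℕ}

lemma adj_of_fst_eq (a : Fin w) {j j' : Fin w} (h : j ≠ j') : (Hw w).Adj (a, j) (a, j') := by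
  rw [Hw, SimpleGraph.fromRel_adj]
  exact ⟨by simp [h], Or.inl (Or.inl rfl)⟩

lemma adj_swap {i j : Fin w} (h : j ≠ i) : (Hw w).Adj (j, i) (i, j) := by
  rw [Hw, SimpleGraph.fromRel_adj]
  exact ⟨by simp [h], Or.inl (Or.inr ⟨rfl, rfl⟩)⟩

end Hw

lemma Bset_induce_connected {w : ℕ} {i : Fin w} {Z : Finset (Fin w)} (hZ : Z.Nonempty) :
    ((Hw w).induce (Bset w i Z)).Connected := by
  obtain ⟨j₀, hj₀⟩ := hZ
  let hub : Bset w i Z := ⟨(i, j₀), Or.inl ⟨rfl, hj₀⟩⟩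
  have row_reach (j : Fin w) (hj : j ∈ Z) :
      ((Hw w).induce (Bset w i Z)).Reachable ⟨(i, j), Or.inl ⟨rfl, hj⟩⟩ hub := by
    by_cases hjj : j = j₀
    · subst hjj; rfl
    · exact SimpleGraph.Adj.reachable (SimpleGraph.induce_adj.2 (Hw.adj_of_fst_eq i hjj))
  have reach_hub : ∀ v, ((Hw w).induce (Bset w i Z)).Reachable v hub := by
    rintro ⟨⟨a, b⟩, ⟨ha, hb⟩ | ⟨hb, ha⟩⟩ <;> dsimp only at ha hb
    · subst a
      exact row_reach b hb
    · subst b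
      by_cases hai : a = i
      · subst a; exact row_reach i ha
      · exact (SimpleGraph.Adj.reachable (v := ⟨(i, a), Or.inl ⟨rfl, ha⟩⟩)
          (SimpleGraph.induce_adj.2 (Hw.adj_swap hai))).trans (row_reach a ha)
  exact (SimpleGraph.connected_iff _).2 ⟨fun u v => (reach_hub u).trans (reach_hub v).symm, ⟨hub⟩⟩

lemma touch_Bset {w : ℕ} {i i' : Fin w} {Z Z' : Finset (Fin w)} (hi : i ∉ Z) (hi' : i' ∉ Z')
    (hcard : #Z + #Z' = w) : Touch (Hw w) (Bset w i Z) (Bset w i' Z') := by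
  by_cases hcross : i ∈ Z' ∧ i' ∈ Z
  · exact Or.inl ⟨(i, i'), Or.inl ⟨rfl, hcross.2⟩, Or.inr ⟨rfl, hcross.1⟩⟩
  have hmiss : ∃ x, x ∉ Z ∪ Z' := by
    by_cases h : i ∈ Z'
    · exact ⟨i', notMem_union.2 ⟨fun h' => hcross ⟨h, h'⟩, hi'⟩⟩
    · exact ⟨i, notMem_union.2 ⟨hi, h⟩⟩
  obtain ⟨x, hx⟩ := hmiss
  obtain ⟨j, hj⟩ := inter_nonempty_of_notMem_union hx (by simp [hcard])
  rw [mem_inter] at hj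
  by_cases hii : i = i'
  · subst hii
    exact Or.inl ⟨(i, j), Or.inl ⟨rfl, hj.1⟩, Or.inl ⟨rfl, hj.2⟩⟩
  · exact Or.inr ⟨(j, i), Or.inr ⟨rfl, hj.1⟩, (j, i'), Or.inr ⟨rfl, hj.2⟩,
      Hw.adj_of_fst_eq j hii⟩

theorem Bfam_isBramble_general (w : ℕ) (hweven : Even w) :
    IsBramble (Hw w) (Bfam w) := by
  obtain ⟨m, rfl⟩ := hweven
  refine ⟨?_, ?_⟩
  · rintro A ⟨i, Z, -, hZ, rfl⟩
    refine Bset_induce_connected (card_pos.1 ?_)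
    have := i.pos
    omega
  · rintro A ⟨i, Z, hi, hZ, rfl⟩ B ⟨i', Z', hi', hZ', rfl⟩
    exact touch_Bset hi hi' (by omega)

theorem Bfam_isBramble (w : ℕ) (hw : 0 < w) (hweven : Even w) :
    IsBramble (Hw w) (Bfam w) :=
  Bfam_isBramble_general w hweven

end
end

section
/- For every even positive integer w, the treewidth of the graph H_w (w cliques Q_1,…,Q_w of size w with cross edges {(i,j),(j,i)} for i ≠ j) is at least w²/16 − 1. -/
open scoped Classical

noncomputable section
open scoped Classical
open MGraph

/-! The sets `B(i, Z)` with `i ∉ Z` and `|Z| = w/2` form a bramble of `H_w`: each is a star of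
row and cross edges around the row `Q_i`, and two of them touch because either `Z ∩ Z'` gives a
common row or column, or `Z, Z'` are complementary halves, so that `i' ∈ Z`, `i ∈ Z'` and the
cross edge `(i,i')(i',i)` joins them. Some bag of a tree decomposition meets every element of a
bramble: otherwise each node `t` points to the neighbour whose branch holds the bags of an
element missed by `Y t`, and since elements touch, following these pointers never backtracks and
the branches shrink strictly, which is impossible in a finite tree. Finally a set meeting every
`B(i, Z)` contains, for each `i`, at least `w/2` of the pairs `(i,j)`, `(j,i)`, and each vertex is
counted at most twice, so the bag has at least `w²/4` vertices. -/

namespace SimpleGraph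

variable {V : Type*} {G : SimpleGraph V}

lemma reachable_deleteEdges_of_not_reachable {e e' : Sym2 V} {a b u : V}
    (hab : (G.deleteEdges {e}).Reachable a b) (hu : u ∈ e')
    (hau : ¬ (G.deleteEdges {e}).Reachable a u) : (G.deleteEdges {e'}).Reachable a b := by
  rw [reachable_iff_reflTransGen] at hab
  induction hab with
  | refl => rfl
  | @tail b c hab hbc ih =>
    have hne : s(b, c) ≠ e' := by
      rintro rfl
      rcases Sym2.mem_iff.mp hu with rfl | rfl
      · exact hau ((reachable_iff_reflTransGen _ _).mpr hab)
      · exact hau ((reachable_iff_reflTransGen _ _).mpr (hab.tail hbc))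
    exact ih.trans (Adj.reachable (deleteEdges_adj.mpr ⟨(deleteEdges_adj.mp hbc).1, by simpa⟩))

lemma Reachable.deleteEdges_of_induce {U : Set V} {e : Sym2 V} {t : V} (ht : t ∈ e)
    (htU : t ∉ U) {x y : U} (h : (G.induce U).Reachable x y) :
    (G.deleteEdges {e}).Reachable x y :=
  h.map
    { toFun := Subtype.val
      map_rel' := fun {a b} hab => deleteEdges_adj.mpr ⟨hab, by
        rintro rfl
        rcases Sym2.mem_iff.mp ht with rfl | rfl
        exacts [htU a.2, htU b.2]⟩ }

def branch (T : SimpleGraph V) (t s : V) : Set V :=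
  {x | (T.deleteEdges {s(t, s)}).Reachable s x}

variable {T : SimpleGraph V} {t s : V}

lemma mem_branch_self : s ∈ T.branch t s := Reachable.refl _

lemma Connected.exists_mem_branch (hT : T.Connected) {x : V} (hx : x ≠ t) :
    ∃ s, T.Adj t s ∧ x ∈ T.branch t s := by
  obtain ⟨p, hp⟩ := hT.exists_isPath t x
  cases p with
  | nil => exact absurd rfl hx
  | cons h q =>
    refine ⟨_, h, ⟨q.toDeleteEdge _ fun he => ?_⟩⟩
    exact ((Walk.cons_isPath_iff h q).mp hp).2 (q.fst_mem_support_of_mem_edges he)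

namespace IsAcyclic

lemma not_reachable_deleteEdges (hT : T.IsAcyclic) (h : T.Adj t s) :
    ¬ (T.deleteEdges {s(t, s)}).Reachable t s :=
  isBridge_iff.mp (isAcyclic_iff_forall_adj_isBridge.mp hT h)

lemma notMem_branch (hT : T.IsAcyclic) (h : T.Adj t s) : t ∉ T.branch t s :=
  fun hr => hT.not_reachable_deleteEdges h hr.symm

lemma disjoint_branch (hT : T.IsAcyclic) (h : T.Adj t s) :
    Disjoint (T.branch t s) (T.branch s t) := by
  refine Set.disjoint_left.mpr fun x hx hx' => hT.not_reachable_deleteEdges h ?_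
  rw [branch, Sym2.eq_swap] at hx'
  exact hx'.trans hx.symm

lemma branch_subset_branch (hT : T.IsAcyclic) {t' t'' : V} (h : T.Adj t t')
    (h' : T.Adj t' t'') (hne : t'' ≠ t) : T.branch t' t'' ⊆ T.branch t t' := by
  intro x hx
  have hfar : (T.deleteEdges {s(t, t')}).Reachable t'' x :=
    reachable_deleteEdges_of_not_reachable hx (Sym2.mem_mk_right t t')
      fun hr => hT.not_reachable_deleteEdges h' hr.symm
  refine Adj.reachable (deleteEdges_adj.mpr ⟨h', ?_⟩) |>.trans hfar
  simp only [Set.mem_singleton_iff, Sym2.eq_iff, not_or, not_and]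
  exact ⟨fun htt' => absurd htt'.symm h.ne, fun _ => hne⟩

end IsAcyclic

end SimpleGraph

namespace IsTreeDecomp

open SimpleGraph

variable {α ι : Type} {G : SimpleGraph α} {T : SimpleGraph ι} {Y : ι → Set α}

lemma reachable_deleteEdges_of_mem (htd : IsTreeDecomp G T Y) {A : Set α}
    (hA : (G.induce A).Preconnected) {t : ι} (hAt : Disjoint (Y t) A) {e : Sym2 ι}
    (he : t ∈ e) {v v' : α} (hv : v ∈ A) (hv' : v' ∈ A) {x x' : ι} (hx : v ∈ Y x)
    (hx' : v' ∈ Y x') : (T.deleteEdges {e}).Reachable x x' := by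
  have hbags : ∀ u ∈ A, ∀ y y', u ∈ Y y → u ∈ Y y' → (T.deleteEdges {e}).Reachable y y' :=
    fun u hu y y' hy hy' => Reachable.deleteEdges_of_induce (U := {z | u ∈ Y z}) he
      (hAt.notMem_of_mem_right hu) ((htd.2.2.2 u).preconnected ⟨y, hy⟩ ⟨y', hy'⟩)
  suffices ∀ c : A, Relation.ReflTransGen (G.induce A).Adj ⟨v, hv⟩ c →
      ∀ y, c.1 ∈ Y y → (T.deleteEdges {e}).Reachable x y from
    this ⟨v', hv'⟩ ((reachable_iff_reflTransGen _ _).mp (hA _ _)) x' hx'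
  intro c hc
  induction hc with
  | refl => exact fun y hy => hbags v hv x y hx hy
  | @tail b c _ hbc ih =>
    intro y hy
    obtain ⟨z, hbz, hcz⟩ := htd.2.2.1 b c hbc
    exact (ih z hbz).trans (hbags c c.2 z y hcz hy)

lemma exists_branch_of_disjoint (htd : IsTreeDecomp G T Y) {A : Set α}
    (hA : (G.induce A).Connected) {t : ι} (hAt : Disjoint (Y t) A) :
    ∃ s, T.Adj t s ∧ ∀ v ∈ A, ∀ x, v ∈ Y x → x ∈ T.branch t s := by
  obtain ⟨⟨v₀, hv₀⟩⟩ := hA.nonempty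
  obtain ⟨x₀, hx₀⟩ := htd.2.1 v₀
  have hx₀t : x₀ ≠ t := by
    rintro rfl
    exact hAt.notMem_of_mem_right hv₀ hx₀
  obtain ⟨s, hs, hx₀s⟩ := htd.1.connected.exists_mem_branch hx₀t
  exact ⟨s, hs, fun v hv x hx => Reachable.trans hx₀s <|
    htd.reachable_deleteEdges_of_mem hA.preconnected hAt (Sym2.mem_mk_left t s) hv₀ hv hx₀ hx⟩

lemma exists_bag_meets_bramble [Finite ι] (htd : IsTreeDecomp G T Y) {ℬ : Set (Set α)}
    (hℬ : IsBramble G ℬ) : ∃ t, ∀ A ∈ ℬ, (Y t ∩ A).Nonempty := by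
  by_contra! hmiss
  choose A hAℬ hAt using hmiss
  have hT := htd.1.isAcyclic
  have hbranch (t : ι) : ∃ s, T.Adj t s ∧ ∀ v ∈ A t, ∀ x, v ∈ Y x → x ∈ T.branch t s :=
    htd.exists_branch_of_disjoint (hℬ.1 _ (hAℬ t)) (Set.disjoint_iff_inter_eq_empty.mpr (hAt t))
  choose g hg hAg using hbranch
  have hshared (t : ι) : ∃ x, x ∈ T.branch t (g t) ∧ x ∈ T.branch (g t) (g (g t)) := by
    rcases hℬ.2 _ (hAℬ t) _ (hAℬ (g t)) with ⟨v, hv, hv'⟩ | ⟨a, ha, b, hb, hab⟩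
    · obtain ⟨x, hx⟩ := htd.2.1 v
      exact ⟨x, hAg t v hv x hx, hAg (g t) v hv' x hx⟩
    · obtain ⟨x, hax, hbx⟩ := htd.2.2.1 a b hab
      exact ⟨x, hAg t a ha x hax, hAg (g t) b hb x hbx⟩
  have hdescent (t : ι) : T.branch (g t) (g (g t)) ⊂ T.branch t (g t) := by
    obtain ⟨x, hx, hx'⟩ := hshared t
    have hback : g (g t) ≠ t := by
      rintro hgg
      rw [hgg] at hx'
      exact (hT.disjoint_branch (hg t)).notMem_of_mem_left hx hx'
    exact ⟨hT.branch_subset_branch (hg t) (hg (g t)) hback,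
      fun hsub => hT.notMem_branch (hg (g t)) (hsub mem_branch_self)⟩
  have hnone (S : Set ι) : ∀ t, T.branch t (g t) ≠ S := by
    induction S using WellFoundedLT.induction with
    | _ S ih => exact fun t hS => ih _ (hS ▸ hdescent t) (g t) rfl
  obtain ⟨t⟩ := htd.1.connected.nonempty
  exact hnone _ t rfl

end IsTreeDecomp

section Hw

open Finset

variable {w : ℕ} {i j : Fin w} {Z : Finset (Fin w)}

lemma hw_adj_of_snd_ne {j' : Fin w} (h : j ≠ j') : (Hw w).Adj (i, j) (i, j') := by
  simp [Hw, h]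

lemma hw_adj_swap (h : i ≠ j) : (Hw w).Adj (i, j) (j, i) := by
  simp [Hw, h]

lemma mk_mem_bset (hj : j ∈ Z) : (i, j) ∈ Bset w i Z := Or.inl ⟨rfl, hj⟩

lemma swap_mem_bset (hj : j ∈ Z) : (j, i) ∈ Bset w i Z := Or.inr ⟨rfl, hj⟩

lemma inter_bset_nonempty_iff {X : Set (Fin w × Fin w)} :
    (X ∩ Bset w i Z).Nonempty ↔ ∃ j ∈ Z, (i, j) ∈ X ∨ (j, i) ∈ X := by
  constructor
  · rintro ⟨⟨a, b⟩, hX, ⟨rfl, hb⟩ | ⟨rfl, ha⟩⟩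
    exacts [⟨b, hb, Or.inl hX⟩, ⟨a, ha, Or.inr hX⟩]
  · rintro ⟨j, hj, hX | hX⟩
    exacts [⟨_, hX, mk_mem_bset hj⟩, ⟨_, hX, swap_mem_bset hj⟩]

lemma bset_connected (hi : i ∉ Z) (hZ : Z.Nonempty) :
    ((Hw w).induce (Bset w i Z)).Connected := by
  obtain ⟨j₀, hj₀⟩ := hZ
  let hub : Bset w i Z := ⟨(i, j₀), mk_mem_bset hj₀⟩
  have hrow (j : Fin w) (hj : j ∈ Z) :
      ((Hw w).induce (Bset w i Z)).Reachable ⟨(i, j), mk_mem_bset hj⟩ hub := by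
    by_cases hjj : j = j₀
    · subst hjj; rfl
    · exact SimpleGraph.Adj.reachable (hw_adj_of_snd_ne hjj)
  have hreach (p : Bset w i Z) : ((Hw w).induce (Bset w i Z)).Reachable p hub := by
    obtain ⟨⟨a, b⟩, ⟨rfl, hb⟩ | ⟨rfl, ha⟩⟩ := p
    · exact hrow b hb
    · have hcross : ((Hw w).induce (Bset w b Z)).Adj ⟨(a, b), swap_mem_bset ha⟩
          ⟨(b, a), mk_mem_bset ha⟩ := hw_adj_swap fun h => hi (h ▸ ha)
      exact hcross.reachable.trans (hrow a ha)
  exact (SimpleGraph.connected_iff _).mpr ⟨fun p q => (hreach p).trans (hreach q).symm, ⟨hub⟩⟩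

lemma bset_touch (hweven : Even w) {i' : Fin w} {Z' : Finset (Fin w)} (hi : i ∉ Z)
    (hi' : i' ∉ Z') (hc : #Z = w / 2) (hc' : #Z' = w / 2) :
    Touch (Hw w) (Bset w i Z) (Bset w i' Z') := by
  by_cases hZZ' : Disjoint Z Z'
  · -- two disjoint halves cover all of `Fin w`, so `i' ∈ Z` and `i ∈ Z'`
    have hcover : Z ∪ Z' = univ := by
      obtain ⟨m, rfl⟩ := hweven
      apply eq_univ_of_card
      rw [card_union_of_disjoint hZZ', hc, hc', Fintype.card_fin]
      omega
    have hiZ' : i ∈ Z' := (mem_union.mp (hcover ▸ mem_univ i)).resolve_left hi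
    have hi'Z : i' ∈ Z := (mem_union.mp (hcover ▸ mem_univ i')).resolve_right hi'
    exact Or.inr ⟨(i, i'), mk_mem_bset hi'Z, (i', i), mk_mem_bset hiZ',
      hw_adj_swap fun h => hi (h ▸ hi'Z)⟩
  · obtain ⟨j, hj, hj'⟩ := not_disjoint_iff.mp hZZ'
    by_cases hii' : i = i'
    · subst hii'
      exact Or.inl ⟨(i, j), mk_mem_bset hj, mk_mem_bset hj'⟩
    · exact Or.inr ⟨(j, i), swap_mem_bset hj, (j, i'), swap_mem_bset hj', hw_adj_of_snd_ne hii'⟩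

lemma isBramble_bfam (hweven : Even w) : IsBramble (Hw w) (Bfam w) := by
  constructor
  · rintro _ ⟨i, Z, hi, hc, rfl⟩
    refine bset_connected hi (card_pos.mp ?_)
    obtain ⟨m, rfl⟩ := hweven
    have := i.pos
    omega
  · rintro _ ⟨i, Z, hi, hc, rfl⟩ _ ⟨i', Z', hi', hc', rfl⟩
    exact bset_touch hweven hi hi' hc hc'

lemma half_le_card_filter {X : Set (Fin w × Fin w)} (hX : ∀ A ∈ Bfam w, (X ∩ A).Nonempty)
    (i : Fin w) : w / 2 ≤ #{j | (i, j) ∈ X ∨ (j, i) ∈ X} := by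
  by_contra! hlt
  set N : Finset (Fin w) := {j | (i, j) ∈ X ∨ (j, i) ∈ X}
  have hfree : w / 2 ≤ #(insert i N)ᶜ := by
    rw [card_compl, Fintype.card_fin]
    have := card_insert_le i N
    omega
  obtain ⟨Z, hZ, hc⟩ := exists_subset_card_eq hfree
  have hiZ : i ∉ Z := fun h => mem_compl.mp (hZ h) (mem_insert_self i N)
  obtain ⟨j, hj, hjX⟩ := inter_bset_nonempty_iff.mp (hX _ ⟨i, Z, hiZ, hc, rfl⟩)
  exact mem_compl.mp (hZ hj) (mem_insert_of_mem (mem_filter.mpr ⟨mem_univ j, hjX⟩))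

lemma mul_half_le_two_mul_ncard {X : Set (Fin w × Fin w)}
    (hX : ∀ A ∈ Bfam w, (X ∩ A).Nonempty) : w * (w / 2) ≤ 2 * X.ncard := by
  set F := X.toFinset
  have hnbrs (i : Fin w) : #{j | (i, j) ∈ X ∨ (j, i) ∈ X} ≤
      #{p ∈ F | p.1 = i} + #{p ∈ F | p.2 = i} := by
    calc _ ≤ #({p ∈ F | p.1 = i}.image Prod.snd ∪ {p ∈ F | p.2 = i}.image Prod.fst) := by
          refine card_le_card fun j hj => ?_
          simp only [mem_filter, mem_univ, true_and] at hj
          rcases hj with h | h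
          · exact mem_union_left _ (mem_image.mpr ⟨(i, j), by simp [F, h], rfl⟩)
          · exact mem_union_right _ (mem_image.mpr ⟨(j, i), by simp [F, h], rfl⟩)
      _ ≤ _ := (card_union_le _ _).trans (add_le_add card_image_le card_image_le)
  calc w * (w / 2) = ∑ _i : Fin w, w / 2 := by simp
    _ ≤ ∑ i, #{j | (i, j) ∈ X ∨ (j, i) ∈ X} := sum_le_sum fun i _ => half_le_card_filter hX i
    _ ≤ ∑ i, (#{p ∈ F | p.1 = i} + #{p ∈ F | p.2 = i}) := sum_le_sum fun i _ => hnbrs i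
    _ = 2 * X.ncard := by
      rw [sum_add_distrib, ← card_eq_sum_card_fiberwise (by simp),
        ← card_eq_sum_card_fiberwise (by simp), Set.ncard_eq_toFinset_card']
      ring

end Hw

theorem tw_Hw_lower_bound_general (w : ℕ) (hweven : Even w) (k : ℕ)
    (h : twLE (Hw w) k) : (w : ℝ) ^ 2 / 16 - 1 ≤ k := by
  obtain ⟨ι, _, T, Y, htd, hwidth⟩ := h
  obtain ⟨t, ht⟩ := htd.exists_bag_meets_bramble (isBramble_bfam hweven)
  have hcount : w * (w / 2) ≤ 2 * (k + 1) :=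
    (mul_half_le_two_mul_ncard ht).trans (by have := hwidth t; omega)
  obtain ⟨m, rfl⟩ := hweven
  rw [show (m + m) / 2 = m by omega] at hcount
  have hcount' : ((m + m : ℕ) : ℝ) * m ≤ 2 * (k + 1) := by exact_mod_cast hcount
  push_cast at hcount' ⊢
  nlinarith

theorem tw_Hw_lower_bound (w : ℕ) (hw : 0 < w) (hweven : Even w) (k : ℕ)
    (h : twLE (Hw w) k) : (w : ℝ) ^ 2 / 16 - 1 ≤ k :=
  tw_Hw_lower_bound_general w hweven k h

end
end
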